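/- arXiv:1702.07713 — 4 statements merged into one kernel-verified Lean document; each statement's English description precedes it below -/
import Mathlib

section
/- If polynomials H_2(z), ..., H_N(z) over a field (viewed as polynomials in z^{-1}, i.e., elements of K[w] with w = z^{-1}) are coprime (their gcd is 1), then there exist polynomials G_1, ..., G_N of the form G_1 = 1 - w·U_1 and G_i = -w·U_i for i ≥ 2, with U_i polynomials in w, such that G_1·H_1 + G_2·H_2 + ... + G_N·H_N equals a constant c. -/
open Polynomial

/-- If the polynomials `H i`, `i ≠ 0` (representing `H_2, …, H_N`) are coprime, i.e. some
combination `∑_{i ≠ 0} V i * H i = 1` exists, then there are MCLP-form filters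
`G 0 = 1 - X * U 0`, `G i = -(X * U i)` for `i ≠ 0`, such that `∑ i, G i * H i` is a
constant `c`. -/
theorem mclp_filters_exist {K : Type*} [Field K] {N : ℕ} [NeZero N]
    (H : Fin N → Polynomial K)
    (hcoprime : ∃ V : Fin N → Polynomial K, V 0 = 0 ∧ ∑ i, V i * H i = 1) :
    ∃ (U : Fin N → Polynomial K) (c : K),
      (∑ i, (if i = 0 then 1 - X * U i else -(X * U i)) * H i) = C c := by
  obtain ⟨V, hV0, hV⟩ := hcoprime
  refine ⟨fun i => (H 0).divX * V i, (H 0).coeff 0, ?_⟩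
  have key : ∑ i, (if i = 0 then 1 - X * ((H 0).divX * V i)
      else -(X * ((H 0).divX * V i))) * H i
      = H 0 - X * (H 0).divX * ∑ i, V i * H i := by
    rw [Finset.mul_sum]
    have : ∀ i : Fin N, (if i = 0 then 1 - X * ((H 0).divX * V i)
        else -(X * ((H 0).divX * V i))) * H i
        = (if i = 0 then H 0 else 0) - X * (H 0).divX * (V i * H i) := by
      intro i
      by_cases hi : i = 0
      · subst hi; simp; ring
      · simp [hi]; ring
    rw [Finset.sum_congr rfl (fun i _ => this i), Finset.sum_sub_distrib,
      Finset.sum_ite_eq' Finset.univ (0 : Fin N) (fun _ => H 0)]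
    simp
  rw [key, hV, mul_one]
  linear_combination - Polynomial.X_mul_divX_add (H 0)
end

section
/- Let H be an N×K polynomial matrix (entries in K[w], K a field, K ≤ N) of rank K. If the greatest common divisor of all K×K minors of H is a nonzero constant, then there exists a K×N polynomial matrix V such that V·H = I (the K×K identity matrix). -/
open Polynomial

/-- If an `N × K` polynomial matrix (`K ≤ N`) has full column rank `K` and the gcd of all
its `K × K` minors is a nonzero constant (degree `0`), then it has a polynomial left
inverse `V` with `V * H = 1`. -/
theorem left_inverse_of_gcd_minors_constant {𝕜 : Type*} [Field 𝕜] [DecidableEq 𝕜]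
    {N K : ℕ} (hKN : K ≤ N) (H : Matrix (Fin N) (Fin K) (Polynomial 𝕜))
    (hrank : H.rank = K)
    (hgcd : (Finset.univ.gcd
      (fun r : Fin K ↪ Fin N => (H.submatrix r id).det)).degree = 0) :
    ∃ V : Matrix (Fin K) (Fin N) (Polynomial 𝕜), V * H = 1 := by
  classical
  set f : (Fin K ↪ Fin N) → Polynomial 𝕜 :=
    fun r => (H.submatrix r id).det with hf
  -- the gcd is a unit
  have hgunit : IsUnit (Finset.univ.gcd f) :=
    Polynomial.isUnit_iff_degree_eq_zero.mpr hgcd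
  -- the ideal generated by the minors is the whole ring
  have hone : (1 : Polynomial 𝕜) ∈ Ideal.span (Set.range f) := by
    obtain ⟨d, hd⟩ := (IsPrincipalIdealRing.principal (Ideal.span (Set.range f))).principal
    have hddvd : ∀ r : Fin K ↪ Fin N, d ∣ f r := by
      intro r
      have : f r ∈ Ideal.span (Set.range f) :=
        Ideal.subset_span ⟨r, rfl⟩
      rw [hd] at this
      exact Ideal.mem_span_singleton.mp this
    have hdg : d ∣ Finset.univ.gcd f :=
      Finset.dvd_gcd fun r _ => hddvd r
    have hdunit : IsUnit d := isUnit_of_dvd_unit hdg hgunit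
    rw [hd]
    exact (Ideal.eq_top_iff_one _).mp (Ideal.span_singleton_eq_top.mpr hdunit)
  -- Bézout coefficients
  rw [Ideal.span, Submodule.mem_span_range_iff_exists_fun] at hone
  obtain ⟨c, hc⟩ := hone
  -- the candidate left inverse
  refine ⟨∑ r : Fin K ↪ Fin N,
      c r • ((H.submatrix r id).adjugate *
        (1 : Matrix (Fin N) (Fin N) (Polynomial 𝕜)).submatrix r id), ?_⟩
  have key : ∀ r : Fin K ↪ Fin N,
      (1 : Matrix (Fin N) (Fin N) (Polynomial 𝕜)).submatrix r id * H
        = H.submatrix r id := by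
    intro r
    have := Matrix.submatrix_mul (1 : Matrix (Fin N) (Fin N) (Polynomial 𝕜)) H
      r (id : Fin N → Fin N) (id : Fin K → Fin K) Function.bijective_id
    simpa using this.symm
  rw [Matrix.sum_mul]
  have : ∀ r : Fin K ↪ Fin N,
      (c r • ((H.submatrix r id).adjugate *
        (1 : Matrix (Fin N) (Fin N) (Polynomial 𝕜)).submatrix r id)) * H
        = (c r * f r) • (1 : Matrix (Fin K) (Fin K) (Polynomial 𝕜)) := by
    intro r
    rw [Matrix.smul_mul, Matrix.mul_assoc, key r, Matrix.adjugate_mul, hf,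
      mul_smul]
  rw [Finset.sum_congr rfl fun r _ => this r, ← Finset.sum_smul]
  simp only [smul_eq_mul] at hc
  rw [hc, one_smul]
end

section
/- Let A be an N×K polynomial matrix over K[w] with K ≤ N, of rank K, whose Smith normal form has constant diagonal. Then A can be reduced to its Smith normal form (the N×K matrix with identity in the top K×K block and zeros below) using elementary row operations only; equivalently, there exists an N×N unimodular polynomial matrix E (det E a nonzero constant) such that E·A = [I_K; 0]. -/
open Polynomial

/-- If an `N × K` polynomial matrix `A` (`K ≤ N`) has full column rank `K` and admits a
Smith normal form with (nonzero) constant diagonal, then `A` can be brought to the form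
`[I_K; 0]` by elementary row operations alone: there is a unimodular `E` with
`E * A = [I_K; 0]`. -/
theorem row_reduce_to_smith_form_of_constant_diagonal
    {𝕜 : Type*} [Field 𝕜] {N K : ℕ} (hKN : K ≤ N)
    (A : Matrix (Fin N) (Fin K) (Polynomial 𝕜))
    (hrank : A.rank = K)
    (hSNF : ∃ (E : Matrix (Fin N) (Fin N) (Polynomial 𝕜))
        (F : Matrix (Fin K) (Fin K) (Polynomial 𝕜)) (d : Fin K → Polynomial 𝕜),
      IsUnit E.det ∧ IsUnit F.det ∧ (∀ i j : Fin K, i ≤ j → d i ∣ d j) ∧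
      (∀ j : Fin K, (d j).degree = 0) ∧
      E * A * F = Matrix.of fun (i : Fin N) (j : Fin K) =>
        if (i : ℕ) = (j : ℕ) then d j else 0) :
    ∃ E : Matrix (Fin N) (Fin N) (Polynomial 𝕜), IsUnit E.det ∧
      E * A = Matrix.of fun (i : Fin N) (j : Fin K) =>
        if (i : ℕ) = (j : ℕ) then 1 else 0 := by
  classical
  obtain ⟨E, F, d, hE, hF, hdvd, hdeg, hEAF⟩ := hSNF
  set T : Matrix (Fin N) (Fin K) (Polynomial 𝕜) :=
    Matrix.of fun (i : Fin N) (j : Fin K) =>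
      if (i : ℕ) = (j : ℕ) then 1 else 0 with hTdef
  have hd0 : ∀ j, (d j).coeff 0 ≠ 0 := by
    intro j h
    have hc := Polynomial.eq_C_of_degree_le_zero (le_of_eq (hdeg j))
    rw [h, map_zero] at hc
    simpa [hc] using hdeg j
  have hdC : ∀ j, d j = C ((d j).coeff 0) := fun j =>
    Polynomial.eq_C_of_degree_le_zero (le_of_eq (hdeg j))
  set Dinv : Matrix (Fin K) (Fin K) (Polynomial 𝕜) :=
    Matrix.diagonal fun j => C ((d j).coeff 0)⁻¹ with hDinvdef
  set G : Matrix (Fin K) (Fin K) (Polynomial 𝕜) := F * Dinv with hGdef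
  have hGdet : IsUnit G.det := by
    rw [hGdef, Matrix.det_mul]
    refine hF.mul ?_
    rw [hDinvdef, Matrix.det_diagonal]
    rw [← map_prod]
    exact Polynomial.isUnit_C.mpr (isUnit_iff_ne_zero.mpr
      (Finset.prod_ne_zero_iff.mpr fun j _ => inv_ne_zero (hd0 j)))
  haveI : Invertible G := Matrix.invertibleOfIsUnitDet G hGdet
  have key : ∀ j, d j * C ((d j).coeff 0)⁻¹ = 1 := by
    intro j
    nth_rewrite 1 [hdC j]
    rw [← C_mul, mul_inv_cancel₀ (hd0 j), map_one]
  have hT : E * A * G = T := by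
    rw [hGdef, ← Matrix.mul_assoc, hEAF]
    refine Matrix.ext fun i j => ?_
    rw [hDinvdef, Matrix.mul_diagonal]
    simp only [Matrix.of_apply, hTdef]
    split
    · exact key j
    · rw [zero_mul]
  have hEA : E * A = T * ⅟G := by
    rw [← hT, Matrix.mul_assoc, mul_invOf_self, Matrix.mul_one]
  -- block matrix X = [[G, 0], [0, 1]] reindexed to Fin N
  have h' : K + (N - K) = N := by omega
  set e : Fin N ≃ Fin K ⊕ Fin (N - K) :=
    (finSumFinEquiv.trans (finCongr h')).symm with hedef
  set X : Matrix (Fin N) (Fin N) (Polynomial 𝕜) :=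
    (Matrix.fromBlocks G 0 0 (1 : Matrix (Fin (N - K)) (Fin (N - K)) (Polynomial 𝕜))).submatrix
      e e with hXdef
  have he_lt : ∀ (i : Fin N) (hi : (i : ℕ) < K), e i = Sum.inl ⟨i, hi⟩ := by
    intro i hi
    rw [hedef, Equiv.symm_apply_eq]
    ext
    simp
  have he_ge : ∀ (i : Fin N) (hi : ¬ (i : ℕ) < K), ∃ m : Fin (N - K), e i = Sum.inr m := by
    intro i hi
    refine ⟨⟨(i : ℕ) - K, by omega⟩, ?_⟩
    rw [hedef, Equiv.symm_apply_eq]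
    ext
    simp
    omega
  have hXdet : IsUnit X.det := by
    rw [hXdef, Matrix.det_submatrix_equiv_self, Matrix.det_fromBlocks_zero₂₁,
      Matrix.det_one, mul_one]
    exact hGdet
  have hXT : X * T = T * G := by
    ext i j
    have hL : (X * T) i j = X i (Fin.castLE hKN j) := by
      rw [Matrix.mul_apply, Finset.sum_eq_single (Fin.castLE hKN j)]
      · simp [hTdef]
      · intro k _ hk
        have : (k : ℕ) ≠ (j : ℕ) := by
          intro h; exact hk (Fin.ext (by simpa using h))
        simp [hTdef, this]
      · simp
    have hcast : e (Fin.castLE hKN j) = Sum.inl j := by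
      rw [he_lt (Fin.castLE hKN j) (by simpa using j.isLt)]
      exact congrArg Sum.inl (Fin.ext rfl)
    rw [hL]
    by_cases hi : (i : ℕ) < K
    · have hXi : X i (Fin.castLE hKN j) = G ⟨i, hi⟩ j := by
        rw [hXdef, Matrix.submatrix_apply, hcast, he_lt i hi]
        rfl
      have hR : (T * G) i j = G ⟨i, hi⟩ j := by
        rw [Matrix.mul_apply, Finset.sum_eq_single (⟨(i : ℕ), hi⟩ : Fin K)]
        · simp [hTdef]
        · intro k _ hk
          have : (i : ℕ) ≠ (k : ℕ) := by
            intro h; exact hk (Fin.ext (by simpa using h.symm))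
          simp [hTdef, this]
        · simp
      rw [hXi, hR]
    · obtain ⟨m, hm⟩ := he_ge i hi
      have hXi : X i (Fin.castLE hKN j) = 0 := by
        rw [hXdef, Matrix.submatrix_apply, hcast, hm]
        rfl
      have hR : (T * G) i j = 0 := by
        rw [Matrix.mul_apply]
        refine Finset.sum_eq_zero fun k _ => ?_
        have : (i : ℕ) ≠ (k : ℕ) := by
          intro h; exact hi (h ▸ k.isLt)
        simp [hTdef, this]
      rw [hXi, hR]
  refine ⟨X * E, ?_, ?_⟩
  · rw [Matrix.det_mul]; exact hXdet.mul hE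
  · rw [Matrix.mul_assoc, hEA, ← Matrix.mul_assoc, hXT, Matrix.mul_assoc, mul_invOf_self, Matrix.mul_one]
end

section
/- Let H be an N×K polynomial matrix over K[w] with K < N, fix r = 1, and let H̄ be the (N-1)×K matrix obtained by deleting row 1 of H. If the gcd of all K×K minors of H̄ is a nonzero constant, then there exist polynomials G_1 = 1 - w·U_1 and G_i = -w·U_i (i = 2,...,N, with U_i ∈ K[w]) such that the row vector (G_1, ..., G_N)·H is a constant vector c ∈ K^K (each entry a degree-0 polynomial). -/
open Polynomial

lemma exists_sum_eq_finset_gcd {R : Type*} [CommRing R] [IsDomain R]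
    [IsPrincipalIdealRing R] [NormalizedGCDMonoid R] {ι : Type*} [DecidableEq ι]
    (s : Finset ι) (f : ι → R) :
    ∃ a : ι → R, ∑ i ∈ s, a i * f i = s.gcd f := by
  classical
  induction s using Finset.induction_on with
  | empty => exact ⟨0, by simp⟩
  | @insert i s hi ih =>
    obtain ⟨b, hb⟩ := ih
    obtain ⟨x, y, hxy⟩ := exists_gcd_eq_mul_add_mul (f i) (s.gcd f)
    refine ⟨fun j => if j = i then x else y * b j, ?_⟩
    rw [Finset.gcd_insert, hxy, Finset.sum_insert hi, ← hb, Finset.sum_mul]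
    simp only [if_pos rfl, if_true]
    rw [mul_comm x (f i)]
    congr 1
    exact Finset.sum_congr rfl fun j hj => by
      rw [if_neg (by rintro rfl; exact hi hj)]; ring

/-- MCLP with multiple sources: `H` is an `(N+1) × K` polynomial matrix (rows = the
reference microphone `0` plus `N` others, `K ≤ N` sources). If the gcd of all `K × K`
minors of the matrix `H̄` obtained by deleting the reference row is a nonzero constant
(degree `0`), then there exist MCLP-form filters `G 0 = 1 - X * U 0`,
`G i = -(X * U i)` (`i ≠ 0`) such that `(G_1, …, G_N) · H` is a constant vector. -/
theorem mclp_multisource_filters_exist {𝕜 : Type*} [Field 𝕜] [DecidableEq 𝕜]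
    {N K : ℕ} (hKN : K ≤ N)
    (H : Matrix (Fin (N + 1)) (Fin K) (Polynomial 𝕜))
    (hgcd : (Finset.univ.gcd
      (fun r : Fin K ↪ Fin N =>
        ((H.submatrix Fin.succ id).submatrix r id).det)).degree = 0) :
    ∃ (U : Fin (N + 1) → Polynomial 𝕜) (c : Fin K → 𝕜),
      ∀ k : Fin K,
        (∑ i, (if i = 0 then 1 - X * U i else -(X * U i)) * H i k) = C (c k) := by
  classical
  set Hb : Matrix (Fin N) (Fin K) (Polynomial 𝕜) := H.submatrix Fin.succ id with hHb
  set f : (Fin K ↪ Fin N) → Polynomial 𝕜 := fun r => (Hb.submatrix r id).det with hf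
  obtain ⟨a, ha⟩ := exists_sum_eq_finset_gcd Finset.univ f
  set g : Polynomial 𝕜 := Finset.univ.gcd f with hg
  have hgne : g ≠ 0 := fun h => by rw [h] at hgcd; simp at hgcd
  have hgC : g = C (g.coeff 0) := Polynomial.eq_C_of_degree_le_zero (le_of_eq hgcd)
  set γ : 𝕜 := g.coeff 0 with hγ
  have hγne : γ ≠ 0 := fun h => hgne (by rw [hgC, h, map_zero])
  set c : Fin K → 𝕜 := fun k => (H 0 k).coeff 0 with hc
  have hdvd : ∀ k, X ∣ (H 0 k - C (c k)) := fun k => by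
    rw [Polynomial.X_dvd_iff]; simp [hc]
  choose Q hQ using hdvd
  set w : (Fin K ↪ Fin N) → Fin K → Polynomial 𝕜 :=
    fun r => Matrix.vecMul Q (Hb.submatrix r id).adjugate with hw
  set V : Fin N → Polynomial 𝕜 :=
    fun j => C γ⁻¹ * ∑ r : Fin K ↪ Fin N,
      a r * (∑ k' : Fin K, if r k' = j then w r k' else 0) with hV
  refine ⟨Fin.cases 0 V, c, fun k => ?_⟩
  have key : ∀ r : Fin K ↪ Fin N,
      (∑ k' : Fin K, w r k' * Hb (r k') k) = f r * Q k := by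
    intro r
    have h1 : (∑ k' : Fin K, w r k' * Hb (r k') k)
        = (Matrix.vecMul (w r) (Hb.submatrix r id)) k := by
      simp [Matrix.vecMul, dotProduct]
    rw [h1, hw, Matrix.vecMul_vecMul, Matrix.adjugate_mul]
    show Matrix.vecMul Q ((Hb.submatrix r id).det • 1) k = (Hb.submatrix r id).det * Q k
    simp [Matrix.vecMul, dotProduct, Matrix.one_apply, mul_ite, mul_comm]
  have hsum : (∑ j : Fin N, V j * Hb j k) = Q k := by
    have e1 : ∀ j : Fin N, V j * Hb j k
        = C γ⁻¹ * ∑ r : Fin K ↪ Fin N,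
            a r * ∑ k' : Fin K, (if r k' = j then w r k' * Hb j k else 0) := by
      intro j
      simp only [hV]
      rw [mul_assoc, Finset.sum_mul]
      congr 1
      refine Finset.sum_congr rfl fun r _ => ?_
      rw [mul_assoc, Finset.sum_mul]
      congr 1
      refine Finset.sum_congr rfl fun k' _ => ?_
      split <;> simp
    calc ∑ j : Fin N, V j * Hb j k
        = C γ⁻¹ * ∑ j : Fin N, ∑ r : Fin K ↪ Fin N,
            a r * ∑ k' : Fin K, (if r k' = j then w r k' * Hb j k else 0) := by
          rw [Finset.mul_sum]; exact Finset.sum_congr rfl fun j _ => e1 j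
      _ = C γ⁻¹ * ∑ r : Fin K ↪ Fin N, a r * ∑ k' : Fin K, w r k' * Hb (r k') k := by
          congr 1
          rw [Finset.sum_comm]
          refine Finset.sum_congr rfl fun r _ => ?_
          rw [← Finset.mul_sum]
          congr 1
          rw [Finset.sum_comm]
          refine Finset.sum_congr rfl fun k' _ => ?_
          simp
      _ = C γ⁻¹ * (g * Q k) := by
          refine congrArg (C γ⁻¹ * ·) ?_
          rw [← ha, Finset.sum_mul]
          exact Finset.sum_congr rfl fun r _ => by rw [key r, mul_assoc]
      _ = Q k := by
          rw [hgC, ← mul_assoc, ← C_mul, inv_mul_cancel₀ hγne, map_one, one_mul]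
  rw [Fin.sum_univ_succ]
  have h0 : ((if (0 : Fin (N+1)) = 0 then 1 - X * (Fin.cases 0 V : Fin (N+1) → Polynomial 𝕜) 0
      else -(X * Fin.cases 0 V 0)) : Polynomial 𝕜) = 1 := by simp
  have hs : ∀ i : Fin N, ((if (i.succ : Fin (N+1)) = 0 then 1 - X * (Fin.cases 0 V : Fin (N+1) → Polynomial 𝕜) i.succ
      else -(X * Fin.cases 0 V i.succ)) : Polynomial 𝕜) = -(X * V i) := by
    intro i; rw [if_neg (Fin.succ_ne_zero i)]; simp
  rw [h0, one_mul]
  rw [Finset.sum_congr rfl fun i _ => by rw [hs i]]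
  have hneg : (∑ i : Fin N, -(X * V i) * H i.succ k) = -(X * ∑ j : Fin N, V j * Hb j k) := by
    rw [Finset.mul_sum, ← neg_one_mul, Finset.mul_sum]
    exact Finset.sum_congr rfl fun j _ => by show -(X * V j) * Hb j k = -1 * (X * (V j * Hb j k)); ring
  rw [hneg, hsum, ← hQ k]
  ring
end
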